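/- Let T be a finite N₀-ary tree with root ∅ and let V(T, v) denote the outcome of a monotone voting algorithm with nondecreasing aggregation function Θ and iid Bernoulli(q) leaf inputs v. Suppose the univariate g-function satisfies g(p) < p for all p ∈ (a, q] where a is a fixed point of g and a < q. Then if T₁ ⊆ T₂ as labelled N₀-ary trees, P[V(∅; T₂, q) = 1] ≤ P[V(∅; T₁, q) = 1]; in particular, if T contains the regular N₀-ary tree of height n, then P[V(∅; T, q) = 1] ≤ g^{(n)}(q). -/

import Mathlib

/-- Finite `N₀`-ary trees with full families. -/
inductive NTree (N₀ : ℕ) : Type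
  | leaf : NTree N₀
  | node : (Fin N₀ → NTree N₀) → NTree N₀

namespace NTree

/-- Labelled subtree relation: `Sub T₁ T₂` means `T₂` contains `T₁`. -/
inductive Sub {N₀ : ℕ} : NTree N₀ → NTree N₀ → Prop
  | leaf (t : NTree N₀) : Sub .leaf t
  | node {c₁ c₂ : Fin N₀ → NTree N₀} :
      (∀ i, Sub (c₁ i) (c₂ i)) → Sub (.node c₁) (.node c₂)

/-- The regular `N₀`-ary tree of height `n`. -/
def regular (N₀ : ℕ) : ℕ → NTree N₀
  | 0 => .leaf
  | n + 1 => .node fun _ => regular N₀ n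

/-- The probability that the root vote is `1` for the monotone voting algorithm on the
tree, with iid `Bernoulli(q)` leaf inputs and multivariate g-function `G`: each vertex's
vote is `Bernoulli(Θ(children's votes))`, so by independence the root probability is
obtained by propagating `G` from the leaves. -/
noncomputable def rootProb {N₀ : ℕ} (G : (Fin N₀ → ℝ) → ℝ) (q : ℝ) : NTree N₀ → ℝ
  | .leaf => q
  | .node c => G fun i => rootProb G q (c i)

end NTree

/-!
`G` is the mean of the monotone function `Θ` under independent Bernoulli inputs, so it is
monotone on `[0,1]^N₀`: conditioning on the first input writes it as a mixture, with weights
`p 0` and `1 - p 0`, of two such means in one dimension less. Since moreover `g q ≤ q`, `G` maps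
`[0,q]^N₀` into `[0,q]`, hence every root probability lies in `[0,q]`. Enlarging a tree replaces
leaves, whose probability is `q`, by subtrees of probability at most `q`, and the monotonicity of
`G` carries this inequality up to the root. The regular tree of height `n` has root probability
`g^[n] q`.
-/

open Set

section BernoulliMean

variable {n : ℕ}

def bernoulliWeight (p : Fin n → ℝ) (v : Fin n → Bool) : ℝ :=
  ∏ i, if v i then p i else 1 - p i

noncomputable def bernoulliMean (p : Fin n → ℝ) (f : (Fin n → Bool) → ℝ) : ℝ :=
  ∑ v, bernoulliWeight p v * f v

theorem bernoulliWeight_nonneg {p : Fin n → ℝ} (hp : p ∈ Icc 0 1) (v : Fin n → Bool) :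
    0 ≤ bernoulliWeight p v :=
  Finset.prod_nonneg fun i _ => by
    split_ifs
    · exact hp.1 i
    · exact sub_nonneg.2 (hp.2 i)

theorem bernoulliMean_succ (p : Fin (n + 1) → ℝ) (f : (Fin (n + 1) → Bool) → ℝ) :
    bernoulliMean p f = bernoulliMean (Fin.tail p)
      (fun v => p 0 * f (Fin.cons true v) + (1 - p 0) * f (Fin.cons false v)) := by
  rw [bernoulliMean, ← (Fin.consEquiv fun _ => Bool).sum_comp, Fintype.sum_prod_type,
    Fintype.sum_bool, ← Finset.sum_add_distrib, bernoulliMean]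
  refine Finset.sum_congr rfl fun v _ => ?_
  simp [bernoulliWeight, Fin.consEquiv, Fin.prod_univ_succ, Fin.tail]
  ring

theorem bernoulliMean_mono_right {p : Fin n → ℝ} (hp : p ∈ Icc 0 1)
    {f f' : (Fin n → Bool) → ℝ} (hf : f ≤ f') : bernoulliMean p f ≤ bernoulliMean p f' :=
  Finset.sum_le_sum fun v _ => mul_le_mul_of_nonneg_left (hf v) (bernoulliWeight_nonneg hp v)

theorem bernoulliMean_nonneg {p : Fin n → ℝ} (hp : p ∈ Icc 0 1) {f : (Fin n → Bool) → ℝ}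
    (hf : 0 ≤ f) : 0 ≤ bernoulliMean p f := by
  simpa [bernoulliMean] using bernoulliMean_mono_right hp hf

theorem monotoneOn_bernoulliMean {f : (Fin n → Bool) → ℝ} (hf : Monotone f) :
    MonotoneOn (bernoulliMean · f) (Icc 0 1) := by
  induction n with
  | zero =>
    intro p _ r _ _
    rw [Subsingleton.elim p r]
  | succ n ih =>
    intro p hp r hr hpr
    set mix : ℝ → (Fin n → Bool) → ℝ :=
      fun x v => x * f (Fin.cons true v) + (1 - x) * f (Fin.cons false v)
    have tail_mem {s : Fin (n + 1) → ℝ} (hs : s ∈ Icc 0 1) : Fin.tail s ∈ Icc 0 1 :=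
      ⟨fun i => hs.1 i.succ, fun i => hs.2 i.succ⟩
    have mix_monotone : Monotone (mix (p 0)) := fun v w hvw =>
      add_le_add
        (mul_le_mul_of_nonneg_left (hf (Fin.cons_le_cons.2 ⟨le_rfl, hvw⟩)) (hp.1 0))
        (mul_le_mul_of_nonneg_left (hf (Fin.cons_le_cons.2 ⟨le_rfl, hvw⟩))
          (sub_nonneg.2 (hp.2 0)))
    have mix_le : mix (p 0) ≤ mix (r 0) := fun v => by
      have : f (Fin.cons false v) ≤ f (Fin.cons true v) :=
        hf (Fin.cons_le_cons.2 ⟨Bool.false_le _, le_rfl⟩)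
      nlinarith [hpr 0]
    calc bernoulliMean p f = bernoulliMean (Fin.tail p) (mix (p 0)) := bernoulliMean_succ p f
      _ ≤ bernoulliMean (Fin.tail r) (mix (p 0)) :=
        ih mix_monotone (tail_mem hp) (tail_mem hr) fun i => hpr i.succ
      _ ≤ bernoulliMean (Fin.tail r) (mix (r 0)) := bernoulliMean_mono_right (tail_mem hr) mix_le
      _ = bernoulliMean r f := (bernoulliMean_succ r f).symm

end BernoulliMean

namespace NTree

variable {N₀ : ℕ} {G : (Fin N₀ → ℝ) → ℝ} {q : ℝ}

theorem rootProb_mem_Icc (hq : 0 ≤ q) (hmaps : MapsTo G (Icc 0 fun _ => q) (Icc 0 q)) :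
    ∀ T : NTree N₀, rootProb G q T ∈ Icc 0 q
  | .leaf => ⟨hq, le_rfl⟩
  | .node c => hmaps ⟨fun i => (rootProb_mem_Icc hq hmaps (c i)).1,
      fun i => (rootProb_mem_Icc hq hmaps (c i)).2⟩

theorem rootProb_le_of_sub (hq : 0 ≤ q) (hmaps : MapsTo G (Icc 0 fun _ => q) (Icc 0 q))
    (hmono : MonotoneOn G (Icc 0 fun _ => q)) {T₁ T₂ : NTree N₀} (h : Sub T₁ T₂) :
    rootProb G q T₂ ≤ rootProb G q T₁ := by
  have children_mem (c : Fin N₀ → NTree N₀) :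
      (fun i => rootProb G q (c i)) ∈ Icc 0 fun _ => q :=
    ⟨fun i => (rootProb_mem_Icc hq hmaps (c i)).1, fun i => (rootProb_mem_Icc hq hmaps (c i)).2⟩
  induction h with
  | leaf t => exact (rootProb_mem_Icc hq hmaps t).2
  | @node c₁ c₂ _ ih => exact hmono (children_mem c₂) (children_mem c₁) ih

theorem rootProb_regular {g : ℝ → ℝ} (hg : ∀ p, g p = G fun _ => p) (n : ℕ) :
    rootProb G q (regular N₀ n) = g^[n] q := by
  induction n with
  | zero => rfl
  | succ n ih => rw [Function.iterate_succ_apply', ← ih, hg]; rfl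

end NTree

theorem stmt12_general (N₀ : ℕ) (Θ : (Fin N₀ → Bool) → ℝ)
    (hΘrange : ∀ v, Θ v ∈ Set.Icc (0:ℝ) 1)
    (hΘmono : ∀ v w : Fin N₀ → Bool, (∀ i, v i ≤ w i) → Θ v ≤ Θ w)
    (G : (Fin N₀ → ℝ) → ℝ)
    (hG : ∀ p : Fin N₀ → ℝ,
      G p = ∑ v : Fin N₀ → Bool, (∏ i, if v i then p i else 1 - p i) * Θ v)
    (g : ℝ → ℝ) (hg : ∀ p, g p = G fun _ => p)
    (a q : ℝ) (ha0 : 0 ≤ a) (haq : a < q) (hq1 : q ≤ 1)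
    (hdec : ∀ p ∈ Set.Ioc a q, g p < p) :
    (∀ T₁ T₂ : NTree N₀, NTree.Sub T₁ T₂ →
        NTree.rootProb G q T₂ ≤ NTree.rootProb G q T₁) ∧
    (∀ (n : ℕ) (T : NTree N₀), NTree.Sub (NTree.regular N₀ n) T →
        NTree.rootProb G q T ≤ g^[n] q) := by
  have hq0 : 0 ≤ q := ha0.trans haq.le
  have hGeq : G = (bernoulliMean · Θ) := funext hG
  have hbox : (Icc 0 fun _ => q : Set (Fin N₀ → ℝ)) ⊆ Icc 0 1 :=
    Icc_subset_Icc_right fun _ => hq1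
  have hmono : MonotoneOn G (Icc 0 fun _ => q) :=
    hGeq ▸ (monotoneOn_bernoulliMean hΘmono).mono hbox
  have hmaps : MapsTo G (Icc 0 fun _ => q) (Icc 0 q) := fun p hp =>
    ⟨hGeq ▸ bernoulliMean_nonneg (hbox hp) fun v => (hΘrange v).1,
      calc G p ≤ G fun _ => q := hmono hp (right_mem_Icc.2 fun _ => hq0) hp.2
        _ = g q := (hg q).symm
        _ ≤ q := (hdec q ⟨haq, le_rfl⟩).le⟩
  have hanti : ∀ T₁ T₂ : NTree N₀, NTree.Sub T₁ T₂ →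
      NTree.rootProb G q T₂ ≤ NTree.rootProb G q T₁ :=
    fun _ _ => NTree.rootProb_le_of_sub hq0 hmaps hmono
  exact ⟨hanti, fun n T h => NTree.rootProb_regular hg n ▸ hanti _ _ h⟩

/-- Monotonicity of the voting outcome in the tree: if `g(p) < p` on `(a,q]` for a fixed
point `a < q`, then `T₁ ⊆ T₂` implies `P[V(∅;T₂,q)=1] ≤ P[V(∅;T₁,q)=1]`; in particular a
tree containing the regular `N₀`-ary tree of height `n` has root probability `≤ g^{(n)}(q)`. -/
theorem stmt12 (N₀ : ℕ) (Θ : (Fin N₀ → Bool) → ℝ)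
    (hΘrange : ∀ v, Θ v ∈ Set.Icc (0:ℝ) 1)
    (hΘmono : ∀ v w : Fin N₀ → Bool, (∀ i, v i ≤ w i) → Θ v ≤ Θ w)
    (G : (Fin N₀ → ℝ) → ℝ)
    (hG : ∀ p : Fin N₀ → ℝ,
      G p = ∑ v : Fin N₀ → Bool, (∏ i, if v i then p i else 1 - p i) * Θ v)
    (g : ℝ → ℝ) (hg : ∀ p, g p = G fun _ => p)
    (a q : ℝ) (ha0 : 0 ≤ a) (hfix : g a = a) (haq : a < q) (hq1 : q ≤ 1)
    (hdec : ∀ p ∈ Set.Ioc a q, g p < p) :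
    (∀ T₁ T₂ : NTree N₀, NTree.Sub T₁ T₂ →
        NTree.rootProb G q T₂ ≤ NTree.rootProb G q T₁) ∧
    (∀ (n : ℕ) (T : NTree N₀), NTree.Sub (NTree.regular N₀ n) T →
        NTree.rootProb G q T ≤ g^[n] q) :=
  stmt12_general N₀ Θ hΘrange hΘmono G hG g hg a q ha0 haq hq1 hdec
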